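/- For any partition λ of n that is not a hook (i.e., λ_2 ≥ 2) and any integer k ≥ 3, the inequality Σ_{u∈λ} h(u)^k < n^k + Σ_{u∈λ} |c(u)|^k is strict. -/

import Mathlib

open Finset

/-- A Young diagram: a finite set of cells `(i, j)` with 1-based coordinates,
closed under decreasing either coordinate (down to 1).  Its rows are the
intervals `[1, λ_i]` for a weakly decreasing sequence `λ`. -/
def IsYoung (Y : Finset (ℕ × ℕ)) : Prop :=
  (∀ p ∈ Y, 1 ≤ p.1 ∧ 1 ≤ p.2) ∧
    ∀ p ∈ Y, ∀ q : ℕ × ℕ, 1 ≤ q.1 → 1 ≤ q.2 → q.1 ≤ p.1 → q.2 ≤ p.2 → q ∈ Y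

/-- `row Y i = λ_i`, the length of the `i`-th row. -/
def row (Y : Finset (ℕ × ℕ)) (i : ℕ) : ℕ := (Y.filter fun p => p.1 = i).card

/-- `col Y j = λ'_j`, the length of the `j`-th column (conjugate partition). -/
def col (Y : Finset (ℕ × ℕ)) (j : ℕ) : ℕ := (Y.filter fun p => p.2 = j).card

/-- Hook length `h(u) = λ_i + λ'_j - i - j + 1` of the cell `u = (i, j)`. -/
def hk (Y : Finset (ℕ × ℕ)) (u : ℕ × ℕ) : ℤ :=
  (row Y u.1 : ℤ) + (col Y u.2 : ℤ) - u.1 - u.2 + 1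

/-- Content `c(u) = j - i` of the cell `u = (i, j)`. -/
def ct (u : ℕ × ℕ) : ℤ := (u.2 : ℤ) - (u.1 : ℤ)

/-! Let `a = λ₁`, `b = λ'₁`, and let `μ = dropHook Y` be `Y` with its first row and column
removed. The cells of `μ` keep their hook lengths and contents; the first-row hook lengths
`a + λ'_j - j` together with the numbers `a + i - 1 - λ_i` (`2 ≤ i ≤ b`) are exactly
`1, …, a + b - 1`; and the first row and column have contents `0, …, a - 1` and `1, …, b - 1`.
For the defect `D(Y) = n^k + ∑ |c|^k - ∑ h^k` this leaves a power-sum inequality, which is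
summed row by row from `sum_shifted_pow_add_le` and telescopes to `D(Y) ≥ D(μ) + |μ|`.
By induction `D ≥ 0`, so `D(Y) ≥ |μ| ≥ 1` as soon as `(2, 2) ∈ Y`. -/

theorem pow_add_pow_add_pow_le (x y z : ℕ) {n : ℕ} (hn : n ≠ 0) :
    x ^ n + y ^ n + z ^ n ≤ (x + y + z) ^ n :=
  (add_le_add_left (pow_add_pow_le x.zero_le y.zero_le hn) _).trans
    (pow_add_pow_le (Nat.zero_le _) z.zero_le hn)

theorem add_pow_add_two (w e n : ℕ) :
    (w + e) ^ (n + 2) = w ^ (n + 2) + e ^ (n + 2) + (n + 2) * e ^ (n + 1) * w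
      + ∑ i ∈ range n, w ^ (i + 2) * e ^ (n - i) * (n + 2).choose (i + 2) := by
  rw [add_pow, sum_range_succ, sum_range_succ', sum_range_succ']
  simp only [Nat.cast_id, zero_add, Nat.sub_zero, Nat.sub_self, pow_zero, pow_one,
    Nat.choose_self, Nat.choose_zero_right, Nat.choose_one_right,
    show n + 2 - 1 = n + 1 by omega, show ∀ i, n + 2 - (i + 1 + 1) = n - i by omega]
  ring

/- Expand in powers of the base: the terms of degree `≥ 2` compare by superadditivity of powers,
and those of degree `1` and `0` leave a surplus `(k - 2) e^k ≥ e`. -/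
theorem sum_shifted_pow_add_le {k : ℕ} (hk : 3 ≤ k) (x y z e : ℕ) :
    (x + e) ^ k + (y + e) ^ k + (z + e) ^ k + (x + y + z + e) ^ k + e
      ≤ x ^ k + y ^ k + z ^ k + (x + y + z + e + e) ^ k := by
  obtain ⟨n, rfl⟩ : ∃ n, k = n + 2 := ⟨k - 2, by omega⟩
  set s := x + y + z + e
  simp only [add_pow_add_two _ e n, mul_assoc]
  have hhigh : ∑ i ∈ range n, x ^ (i + 2) * (e ^ (n - i) * (n + 2).choose (i + 2))
      + ∑ i ∈ range n, y ^ (i + 2) * (e ^ (n - i) * (n + 2).choose (i + 2))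
      + ∑ i ∈ range n, z ^ (i + 2) * (e ^ (n - i) * (n + 2).choose (i + 2))
      ≤ ∑ i ∈ range n, s ^ (i + 2) * (e ^ (n - i) * (n + 2).choose (i + 2)) := by
    simp only [← sum_add_distrib, ← add_mul]
    gcongr with i
    exact (pow_add_pow_add_pow_le x y z (by omega)).trans (Nat.pow_le_pow_left (by omega) _)
  have hlow : 2 * e ^ (n + 2) + e ≤ (n + 2) * e ^ (n + 1) * e := by
    have := Nat.le_self_pow (show n + 2 ≠ 0 by omega) e
    nlinarith [pow_succ e (n + 1)]
  have hs : (n + 2) * e ^ (n + 1) * s = (n + 2) * e ^ (n + 1) * x + (n + 2) * e ^ (n + 1) * y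
      + (n + 2) * e ^ (n + 1) * z + (n + 2) * e ^ (n + 1) * e := by ring
  linarith

theorem sum_add_le_sum_add_of_telescoping {M : Type*} [AddCommMonoid M] [PartialOrder M]
    [IsOrderedCancelAddMonoid M] {u v F G : ℕ → M} {n : ℕ}
    (h : ∀ t < n, u t + F (t + 1) + G t ≤ v t + F t + G (t + 1)) :
    ∑ t ∈ range n, u t + F n + G 0 ≤ ∑ t ∈ range n, v t + F 0 + G n := by
  induction n with
  | zero => simp
  | succ n ih =>
    have hsum := add_le_add (ih fun t ht => h t (by omega)) (h n n.lt_succ_self)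
    rw [sum_range_succ, sum_range_succ]
    refine le_of_add_le_add_right (a := F n + G n) ?_
    convert hsum using 1 <;> abel

theorem sum_range_rows_pow_le {k : ℕ} (hk : 3 ≤ k) (a p : ℕ) (r : ℕ → ℕ)
    (hr : ∀ t < p, 1 ≤ r t ∧ r t ≤ a) :
    ∑ t ∈ range p, (p + r t - t - 1) ^ k + ∑ t ∈ range p, (a + t) ^ k
        + (∑ t ∈ range p, (r t - 1)) ^ k + ∑ t ∈ range p, (r t - 1) + (a + p) ^ k
      ≤ (a + p + ∑ t ∈ range p, (r t - 1)) ^ k + ∑ t ∈ range p, (t + 1) ^ k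
        + ∑ t ∈ range p, (a + t + 1 - r t) ^ k := by
  set m : ℕ → ℕ := fun t => ∑ s ∈ range t, (r s - 1) with hm
  have hm_succ (t : ℕ) : m (t + 1) = m t + (r t - 1) := sum_range_succ _ _
  -- row `t` is `sum_shifted_pow_add_le` for `x = p - t`, `y = a + t + 1 - r t`, `z = m t`,
  -- `e = r t - 1`; the terms in `m` telescope
  have hrow : ∀ t < p,
      ((p + r t - t - 1) ^ k + (a + t) ^ k + (r t - 1)) + m (t + 1) ^ k + (a + p + m t) ^ k
        ≤ ((p - t) ^ k + (a + t + 1 - r t) ^ k) + m t ^ k + (a + p + m (t + 1)) ^ k := by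
    intro t ht
    obtain ⟨hr1, hra⟩ := hr t ht
    have hmt := hm_succ t
    have key := sum_shifted_pow_add_le hk (p - t) (a + t + 1 - r t) (m t) (r t - 1)
    rw [← hm_succ, show p - t + (r t - 1) = p + r t - t - 1 by omega,
      show a + t + 1 - r t + (r t - 1) = a + t by omega,
      show p - t + (a + t + 1 - r t) + m t + (r t - 1) = a + p + m t by omega,
      show a + p + m t + (r t - 1) = a + p + m (t + 1) by omega] at key
    omega
  have htel := sum_add_le_sum_add_of_telescoping
    (u := fun t => (p + r t - t - 1) ^ k + (a + t) ^ k + (r t - 1))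
    (v := fun t => (p - t) ^ k + (a + t + 1 - r t) ^ k) (F := fun t => m t ^ k)
    (G := fun t => (a + p + m t) ^ k) hrow
  have hreflect : ∑ t ∈ range p, (p - t) ^ k = ∑ t ∈ range p, (t + 1) ^ k := by
    rw [← sum_range_reflect]
    exact sum_congr rfl fun t ht => by rw [mem_range] at ht; congr 1; omega
  simp only [sum_add_distrib, hreflect, hm, sum_range_zero, add_zero,
    zero_pow (by omega : k ≠ 0)] at htel
  omega

theorem sum_Icc_eq_sum_range {M : Type*} [AddCommMonoid M] (f : ℕ → M) (c d : ℕ) :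
    ∑ i ∈ Icc c d, f i = ∑ t ∈ range (d + 1 - c), f (c + t) := by
  rw [← Ico_add_one_right_eq_Icc, sum_Ico_eq_sum_range]

theorem sum_Icc_one_pow_eq_sum_range (k n : ℕ) (hk : k ≠ 0) :
    ∑ t ∈ Icc 1 n, t ^ k = ∑ t ∈ range (n + 1), t ^ k := by
  rw [sum_range_succ', sum_Icc_eq_sum_range, zero_pow hk, add_zero, Nat.add_sub_cancel]
  exact sum_congr rfl fun t _ => by rw [add_comm]

/- For `a = λ₁`, `b = λ'₁`, `r = λ` and `m = |dropHook Y|` this is the inequality left over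
once the first hook has been evaluated. -/
theorem sum_Icc_rows_pow_le {k : ℕ} (hk : 3 ≤ k) (a b m : ℕ) (hb : 1 ≤ b) (r : ℕ → ℕ)
    (hr : ∀ i ∈ Icc 2 b, 1 ≤ r i ∧ r i ≤ a) (hm : m + (b - 1) = ∑ i ∈ Icc 2 b, r i) :
    ∑ i ∈ Icc 2 b, (b + r i - i) ^ k + ∑ t ∈ Icc 1 (a + b - 1), t ^ k + m ^ k + m
      ≤ (a + (b - 1) + m) ^ k + ∑ j ∈ Icc 1 a, (j - 1) ^ k + ∑ i ∈ Icc 2 b, (i - 1) ^ k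
        + ∑ i ∈ Icc 2 b, (a + i - 1 - r i) ^ k := by
  obtain ⟨p, rfl⟩ : ∃ p, b = p + 1 := ⟨b - 1, by omega⟩
  have hr' : ∀ t < p, 1 ≤ r (2 + t) ∧ r (2 + t) ≤ a := fun t ht => hr _ (by simp; omega)
  have hm' : m = ∑ t ∈ range p, (r (2 + t) - 1) := by
    have : ∑ t ∈ range p, r (2 + t) = ∑ t ∈ range p, (r (2 + t) - 1 + 1) :=
      sum_congr rfl fun t ht => (Nat.sub_add_cancel (hr' t (mem_range.1 ht)).1).symm
    rw [sum_add_distrib, sum_const, card_range, smul_eq_mul, mul_one] at this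
    rw [sum_Icc_eq_sum_range, show p + 1 + 1 - 2 = p by omega] at hm
    omega
  have hsplit : ∑ t ∈ Icc 1 (a + (p + 1) - 1), t ^ k
      = ∑ t ∈ range a, t ^ k + ∑ t ∈ range p, (a + t) ^ k + (a + p) ^ k := by
    rw [sum_Icc_one_pow_eq_sum_range k _ (by omega), show a + (p + 1) - 1 = a + p by omega,
      sum_range_succ, sum_range_add]
  have := sum_range_rows_pow_le hk a p (fun t => r (2 + t)) hr'
  simp only [sum_Icc_eq_sum_range, hsplit, show p + 1 + 1 - 2 = p by omega,
    show a + 1 - 1 = a by omega, show p + 1 - 1 = p by omega,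
    show ∀ t, p + 1 + r (2 + t) - (2 + t) = p + r (2 + t) - t - 1 from fun t => by omega,
    show ∀ t, 1 + t - 1 = t from fun t => by omega,
    show ∀ t, 2 + t - 1 = t + 1 from fun t => by omega,
    show ∀ t, a + (2 + t) - 1 - r (2 + t) = a + t + 1 - r (2 + t) from fun t => by omega]
  rw [hm']
  omega

theorem Finset.eq_Icc_one_card_of_Icc_subset {s : Finset ℕ} (h0 : 0 ∉ s)
    (h : ∀ j ∈ s, Icc 1 j ⊆ s) : s = Icc 1 #s := by
  rcases s.eq_empty_or_nonempty with rfl | hs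
  · rfl
  have hmax : s = Icc 1 (s.max' hs) := by
    refine le_antisymm (fun j hj => mem_Icc.2 ⟨?_, s.le_max' j hj⟩) (h _ (s.max'_mem hs))
    exact Nat.one_le_iff_ne_zero.2 fun hj0 => h0 (hj0 ▸ hj)
  rw [hmax, Nat.card_Icc, Nat.add_sub_cancel]

def dropHook (Y : Finset (ℕ × ℕ)) : Finset (ℕ × ℕ) :=
  (Y.filter fun p => p.1 ≠ 1 ∧ p.2 ≠ 1).image fun p => (p.1 - 1, p.2 - 1)

def hookLen (Y : Finset (ℕ × ℕ)) (u : ℕ × ℕ) : ℕ :=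
  row Y u.1 + col Y u.2 + 1 - u.1 - u.2

namespace IsYoung

variable {Y : Finset (ℕ × ℕ)}

theorem mem_iff_le_row (hY : IsYoung Y) {i j : ℕ} :
    (i, j) ∈ Y ↔ 1 ≤ j ∧ j ≤ row Y i := by
  set s := (Y.filter fun p => p.1 = i).image Prod.snd
  have hs : ∀ j, j ∈ s ↔ (i, j) ∈ Y := by simp [s]
  have hcard : #s = row Y i :=
    card_image_of_injOn fun p hp q hq h =>
      Prod.ext ((mem_filter.1 hp).2.trans (mem_filter.1 hq).2.symm) h
  have hIcc : s = Icc 1 #s := by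
    refine Finset.eq_Icc_one_card_of_Icc_subset (fun h0 => ?_) fun j hj j' hj' => ?_
    · exact absurd (hY.1 _ ((hs 0).1 h0)).2 (by norm_num)
    · rw [hs] at hj ⊢
      rw [mem_Icc] at hj'
      exact hY.2 _ hj _ (hY.1 _ hj).1 hj'.1 le_rfl hj'.2
  rw [← hs, hIcc, hcard, mem_Icc]

theorem mem_iff_le_col (hY : IsYoung Y) {i j : ℕ} :
    (i, j) ∈ Y ↔ 1 ≤ i ∧ i ≤ col Y j := by
  set s := (Y.filter fun p => p.2 = j).image Prod.fst
  have hs : ∀ i, i ∈ s ↔ (i, j) ∈ Y := by simp [s]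
  have hcard : #s = col Y j :=
    card_image_of_injOn fun p hp q hq h =>
      Prod.ext h ((mem_filter.1 hp).2.trans (mem_filter.1 hq).2.symm)
  have hIcc : s = Icc 1 #s := by
    refine Finset.eq_Icc_one_card_of_Icc_subset (fun h0 => ?_) fun i hi i' hi' => ?_
    · exact absurd (hY.1 _ ((hs 0).1 h0)).1 (by norm_num)
    · rw [hs] at hi ⊢
      rw [mem_Icc] at hi'
      exact hY.2 _ hi _ hi'.1 (hY.1 _ hi).2 hi'.2 le_rfl
  rw [← hs, hIcc, hcard, mem_Icc]

theorem le_row_iff_le_col (hY : IsYoung Y) {i j : ℕ} (hi : 1 ≤ i) (hj : 1 ≤ j) :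
    j ≤ row Y i ↔ i ≤ col Y j := by
  have h1 := hY.mem_iff_le_row (i := i) (j := j)
  have h2 := hY.mem_iff_le_col (i := i) (j := j)
  tauto

theorem row_antitone (hY : IsYoung Y) {i i' : ℕ} (hi : 1 ≤ i) (h : i ≤ i') :
    row Y i' ≤ row Y i := by
  rcases Nat.eq_zero_or_pos (row Y i') with h0 | hpos
  · omega
  have hmem := hY.mem_iff_le_row.2 ⟨hpos, le_rfl⟩
  exact (hY.mem_iff_le_row.1 (hY.2 _ hmem (i, row Y i') hi hpos h le_rfl)).2

theorem col_antitone (hY : IsYoung Y) {j j' : ℕ} (hj : 1 ≤ j) (h : j ≤ j') :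
    col Y j' ≤ col Y j := by
  rcases Nat.eq_zero_or_pos (col Y j') with h0 | hpos
  · omega
  have hmem := hY.mem_iff_le_col.2 ⟨hpos, le_rfl⟩
  exact (hY.mem_iff_le_col.1 (hY.2 _ hmem (col Y j', j) hpos hj le_rfl h)).2

theorem row_eq_of_forall_mem_iff (hY : IsYoung Y) {i L : ℕ}
    (h : ∀ j, (i, j) ∈ Y ↔ 1 ≤ j ∧ j ≤ L) : row Y i = L := by
  have h1 := (h (row Y i)).symm.trans hY.mem_iff_le_row
  have h2 := (h L).symm.trans hY.mem_iff_le_row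
  omega

theorem col_eq_of_forall_mem_iff (hY : IsYoung Y) {j L : ℕ}
    (h : ∀ i, (i, j) ∈ Y ↔ 1 ≤ i ∧ i ≤ L) : col Y j = L := by
  have h1 := (h (col Y j)).symm.trans hY.mem_iff_le_col
  have h2 := (h L).symm.trans hY.mem_iff_le_col
  omega

theorem one_one_mem (hY : IsYoung Y) (hne : Y.Nonempty) : (1, 1) ∈ Y := by
  obtain ⟨p, hp⟩ := hne
  exact hY.2 p hp (1, 1) le_rfl le_rfl (hY.1 p hp).1 (hY.1 p hp).2

theorem card_eq_sum_row (hY : IsYoung Y) : #Y = ∑ i ∈ Icc 1 (col Y 1), row Y i :=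
  card_eq_sum_card_fiberwise fun p hp => by
    have h := hY.1 p hp
    exact mem_Icc.2 (hY.mem_iff_le_col.1 (hY.2 p hp (p.1, 1) h.1 le_rfl le_rfl h.2))

theorem mem_dropHook (hY : IsYoung Y) {i j : ℕ} :
    (i, j) ∈ dropHook Y ↔ 1 ≤ i ∧ 1 ≤ j ∧ (i + 1, j + 1) ∈ Y := by
  simp only [dropHook, mem_image, mem_filter, Prod.mk.injEq, Prod.exists]
  constructor
  · rintro ⟨i', j', ⟨hp, hi', hj'⟩, rfl, rfl⟩
    have := hY.1 _ hp
    refine ⟨by omega, by omega, ?_⟩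
    rwa [Nat.sub_add_cancel this.1, Nat.sub_add_cancel this.2]
  · rintro ⟨hi, hj, hp⟩
    exact ⟨i + 1, j + 1, ⟨hp, by omega, by omega⟩, rfl, rfl⟩

theorem dropHook_isYoung (hY : IsYoung Y) : IsYoung (dropHook Y) := by
  refine ⟨fun ⟨i, j⟩ hp => ?_, fun ⟨i, j⟩ hp ⟨i', j'⟩ hi' hj' hii hjj => ?_⟩
  · obtain ⟨hi, hj, -⟩ := hY.mem_dropHook.1 hp
    exact ⟨hi, hj⟩
  · obtain ⟨-, -, hp⟩ := hY.mem_dropHook.1 hp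
    exact hY.mem_dropHook.2 ⟨hi', hj', hY.2 _ hp _ (by omega) (by omega)
      (Nat.add_le_add_right hii 1) (Nat.add_le_add_right hjj 1)⟩

theorem row_dropHook (hY : IsYoung Y) {i : ℕ} (hi : 1 ≤ i) :
    row (dropHook Y) i = row Y (i + 1) - 1 :=
  hY.dropHook_isYoung.row_eq_of_forall_mem_iff fun j => by
    rw [hY.mem_dropHook, hY.mem_iff_le_row]
    omega

theorem col_dropHook (hY : IsYoung Y) {j : ℕ} (hj : 1 ≤ j) :
    col (dropHook Y) j = col Y (j + 1) - 1 :=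
  hY.dropHook_isYoung.col_eq_of_forall_mem_iff fun i => by
    rw [hY.mem_dropHook, hY.mem_iff_le_col]
    omega

theorem sum_eq_sum_hook_add_sum_dropHook {M : Type*} [AddCommMonoid M] (hY : IsYoung Y)
    (f : ℕ × ℕ → M) :
    ∑ u ∈ Y, f u = ∑ j ∈ Icc 1 (row Y 1), f (1, j) + ∑ i ∈ Icc 2 (col Y 1), f (i, 1)
      + ∑ v ∈ dropHook Y, f (v.1 + 1, v.2 + 1) := by
  have hrow : Y.filter (fun p => p.1 = 1) = (Icc 1 (row Y 1)).image fun j => (1, j) := by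
    ext ⟨i, j⟩
    simp only [mem_filter, mem_image, mem_Icc, Prod.mk.injEq, hY.mem_iff_le_row]
    constructor
    · rintro ⟨hj, rfl⟩; exact ⟨j, hj, rfl, rfl⟩
    · rintro ⟨j, hj, rfl, rfl⟩; exact ⟨hj, rfl⟩
  have hcol : (Y.filter fun p => p.1 ≠ 1).filter (fun p => p.2 = 1)
      = (Icc 2 (col Y 1)).image fun i => (i, 1) := by
    ext ⟨i, j⟩
    simp only [mem_filter, mem_image, mem_Icc, Prod.mk.injEq, hY.mem_iff_le_col]
    constructor
    · rintro ⟨⟨hi, hi1⟩, rfl⟩; exact ⟨i, by omega, rfl, rfl⟩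
    · rintro ⟨i, hi, rfl, rfl⟩; exact ⟨⟨by omega, by omega⟩, rfl⟩
  have hcore : ∑ u ∈ (Y.filter fun p => p.1 ≠ 1).filter (fun p => ¬p.2 = 1), f u
      = ∑ v ∈ dropHook Y, f (v.1 + 1, v.2 + 1) := by
    rw [filter_filter, dropHook, sum_image]
    · refine sum_congr rfl fun p hp => ?_
      have := hY.1 _ (mem_filter.1 hp).1
      rw [Nat.sub_add_cancel this.1, Nat.sub_add_cancel this.2]
    · intro p hp q hq h
      have := hY.1 _ (mem_filter.1 hp).1
      have := hY.1 _ (mem_filter.1 hq).1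
      simp only [Prod.mk.injEq] at h
      exact Prod.ext (by omega) (by omega)
  rw [← sum_filter_add_sum_filter_not Y (fun p => p.1 = 1),
    ← sum_filter_add_sum_filter_not (Y.filter fun p => p.1 ≠ 1) (fun p => p.2 = 1), hrow, hcol,
    hcore, sum_image, sum_image, add_assoc]
  · exact fun _ _ _ _ h => (Prod.mk.inj h).1
  · exact fun _ _ _ _ h => (Prod.mk.inj h).2

theorem card_eq_add_card_dropHook (hY : IsYoung Y) :
    #Y = row Y 1 + (col Y 1 - 1) + #(dropHook Y) := by
  simpa using hY.sum_eq_sum_hook_add_sum_dropHook fun _ => (1 : ℕ)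

theorem card_dropHook_add_eq_sum_row (hY : IsYoung Y) :
    #(dropHook Y) + (col Y 1 - 1) = ∑ i ∈ Icc 2 (col Y 1), row Y i := by
  have hsum := hY.card_eq_sum_row
  rcases Nat.eq_zero_or_pos (col Y 1) with hb | hb
  · have := hY.card_eq_add_card_dropHook
    have := (hY.le_row_iff_le_col le_rfl le_rfl (i := 1) (j := 1))
    simp only [hb, Icc_eq_empty_of_lt, Nat.zero_lt_one, Nat.zero_lt_two, sum_empty] at hsum ⊢
    omega
  rw [Icc_eq_cons_Ioc hb, sum_cons, ← Icc_add_one_left_eq_Ioc] at hsum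
  simp only [Nat.reduceAdd] at hsum
  have := hY.card_eq_add_card_dropHook
  omega

theorem injOn_firstRowHooks (hY : IsYoung Y) :
    Set.InjOn (fun j => row Y 1 + col Y j - j) (Icc 1 (row Y 1)) := by
  refine StrictAntiOn.injOn fun j hj j' hj' hjj' => ?_
  simp only [coe_Icc, Set.mem_Icc] at hj hj'
  have := hY.col_antitone hj.1 hjj'.le
  have := (hY.le_row_iff_le_col le_rfl hj'.1).1 hj'.2
  omega

theorem injOn_firstColGaps (hY : IsYoung Y) :
    Set.InjOn (fun i => row Y 1 + i - 1 - row Y i) (Icc 2 (col Y 1)) := by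
  refine StrictMonoOn.injOn fun i hi i' hi' hii' => ?_
  simp only [coe_Icc, Set.mem_Icc] at hi hi'
  have := hY.row_antitone (by omega) hii'.le
  have := hY.row_antitone le_rfl (show 1 ≤ i by omega)
  omega

theorem disjoint_firstRowHooks_firstColGaps (hY : IsYoung Y) :
    Disjoint ((Icc 1 (row Y 1)).image fun j => row Y 1 + col Y j - j)
      ((Icc 2 (col Y 1)).image fun i => row Y 1 + i - 1 - row Y i) := by
  simp only [disjoint_left, mem_image, mem_Icc, not_exists, not_and]
  rintro _ ⟨j, hj, rfl⟩ i hi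
  have := hY.row_antitone le_rfl (show 1 ≤ i by omega)
  have := hY.le_row_iff_le_col (show 1 ≤ i by omega) hj.1
  omega

theorem sum_firstRowHooks_add_sum_firstColGaps (hY : IsYoung Y) {M : Type*} [AddCommMonoid M]
    (φ : ℕ → M) :
    ∑ j ∈ Icc 1 (row Y 1), φ (row Y 1 + col Y j - j)
      + ∑ i ∈ Icc 2 (col Y 1), φ (row Y 1 + i - 1 - row Y i)
      = ∑ t ∈ Icc 1 (row Y 1 + col Y 1 - 1), φ t := by
  rw [← sum_image hY.injOn_firstRowHooks, ← sum_image hY.injOn_firstColGaps,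
    ← sum_union hY.disjoint_firstRowHooks_firstColGaps]
  congr 1
  refine eq_of_subset_of_card_le (fun t ht => ?_) ?_
  · simp only [mem_union, mem_image, mem_Icc] at ht ⊢
    rcases ht with ⟨j, hj, rfl⟩ | ⟨i, hi, rfl⟩
    · have := (hY.le_row_iff_le_col le_rfl hj.1).1 hj.2
      have := hY.col_antitone le_rfl hj.1
      omega
    · have := (hY.le_row_iff_le_col (show 1 ≤ i by omega) le_rfl).2 hi.2
      have := hY.row_antitone le_rfl (show 1 ≤ i by omega)
      omega
  · rw [card_union_of_disjoint hY.disjoint_firstRowHooks_firstColGaps,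
      card_image_of_injOn hY.injOn_firstRowHooks, card_image_of_injOn hY.injOn_firstColGaps]
    have := hY.le_row_iff_le_col le_rfl le_rfl (i := 1) (j := 1)
    simp only [Nat.card_Icc]
    omega

theorem hk_eq_hookLen (hY : IsYoung Y) {u : ℕ × ℕ} (hu : u ∈ Y) : hk Y u = hookLen Y u := by
  have := hY.mem_iff_le_row.1 hu
  have := hY.mem_iff_le_col.1 hu
  simp only [hk, hookLen]
  omega

theorem hookLen_dropHook (hY : IsYoung Y) {v : ℕ × ℕ} (hv : v ∈ dropHook Y) :
    hookLen (dropHook Y) v = hookLen Y (v.1 + 1, v.2 + 1) := by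
  obtain ⟨hi, hj, hp⟩ := hY.mem_dropHook.1 hv
  have := hY.mem_iff_le_row.1 hp
  have := hY.mem_iff_le_col.1 hp
  simp only [hookLen, hY.row_dropHook hi, hY.col_dropHook hj]
  omega

theorem sum_hookLen_pow_add_le (hY : IsYoung Y) (hne : Y.Nonempty) {k : ℕ} (hk : 3 ≤ k) :
    ∑ u ∈ Y, hookLen Y u ^ k + #(dropHook Y) ^ k + ∑ v ∈ dropHook Y, (ct v).natAbs ^ k
        + #(dropHook Y)
      ≤ #Y ^ k + ∑ u ∈ Y, (ct u).natAbs ^ k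
        + ∑ v ∈ dropHook Y, hookLen (dropHook Y) v ^ k := by
  have hb : 1 ≤ col Y 1 := (hY.mem_iff_le_col.1 (hY.one_one_mem hne)).2
  have hrows : ∀ i ∈ Icc 2 (col Y 1), 1 ≤ row Y i ∧ row Y i ≤ row Y 1 := fun i hi => by
    rw [mem_Icc] at hi
    exact ⟨(hY.le_row_iff_le_col (by omega) le_rfl).2 hi.2, hY.row_antitone le_rfl (by omega)⟩
  have hnum := sum_Icc_rows_pow_le hk (row Y 1) (col Y 1) _ hb (row Y) hrows
    hY.card_dropHook_add_eq_sum_row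
  have hgaps := hY.sum_firstRowHooks_add_sum_firstColGaps (· ^ k)
  have hhook : ∑ u ∈ Y, hookLen Y u ^ k = ∑ j ∈ Icc 1 (row Y 1), (row Y 1 + col Y j - j) ^ k
      + ∑ i ∈ Icc 2 (col Y 1), (col Y 1 + row Y i - i) ^ k
      + ∑ v ∈ dropHook Y, hookLen (dropHook Y) v ^ k := by
    rw [hY.sum_eq_sum_hook_add_sum_dropHook]
    refine congr_arg₂ _
      (congr_arg₂ _ (sum_congr rfl fun j _ => rfl) (sum_congr rfl fun i _ => ?_))
      (sum_congr rfl fun v hv => by rw [hY.hookLen_dropHook hv])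
    simp only [hookLen]
    congr 1
    omega
  have hcontent : ∑ u ∈ Y, (ct u).natAbs ^ k = ∑ j ∈ Icc 1 (row Y 1), (j - 1) ^ k
      + ∑ i ∈ Icc 2 (col Y 1), (i - 1) ^ k + ∑ v ∈ dropHook Y, (ct v).natAbs ^ k := by
    rw [hY.sum_eq_sum_hook_add_sum_dropHook]
    refine congr_arg₂ _
      (congr_arg₂ _ (sum_congr rfl fun j hj => ?_) (sum_congr rfl fun i hi => ?_))
      (sum_congr rfl fun v _ => ?_)
    all_goals (simp only [mem_Icc, ct] at *; congr 1; omega)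
  rw [hhook, hcontent, hY.card_eq_add_card_dropHook]
  omega

theorem sum_hookLen_pow_add_card_dropHook_le (hY : IsYoung Y) {k : ℕ} (hk : 3 ≤ k) :
    ∑ u ∈ Y, hookLen Y u ^ k + #(dropHook Y) ≤ #Y ^ k + ∑ u ∈ Y, (ct u).natAbs ^ k := by
  induction hn : #Y using Nat.strong_induction_on generalizing Y with
  | _ n ih =>
    subst hn
    rcases Y.eq_empty_or_nonempty with rfl | hne
    · simp [dropHook]
    have hlt : #(dropHook Y) < #Y := by
      have := hY.card_eq_add_card_dropHook
      have := (hY.mem_iff_le_row.1 (hY.one_one_mem hne)).2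
      omega
    have := ih _ hlt hY.dropHook_isYoung rfl
    have := hY.sum_hookLen_pow_add_le hne hk
    omega

end IsYoung

theorem non_hook_strict (n : ℕ) (Y : Finset (ℕ × ℕ)) (hY : IsYoung Y)
    (hcard : Y.card = n) (hnothook : 2 ≤ row Y 2) (k : ℕ) (hk3 : 3 ≤ k) :
    ∑ u ∈ Y, (hk Y u) ^ k < (n : ℤ) ^ k + ∑ u ∈ Y, |ct u| ^ k := by
  have h22 : (2, 2) ∈ Y := hY.mem_iff_le_row.2 ⟨one_le_two, hnothook⟩
  have hcore : 1 ≤ #(dropHook Y) :=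
    card_pos.2 ⟨(1, 1), hY.mem_dropHook.2 ⟨le_rfl, le_rfl, h22⟩⟩
  have hle := hY.sum_hookLen_pow_add_card_dropHook_le hk3
  have hhook : ∑ u ∈ Y, hk Y u ^ k = ((∑ u ∈ Y, hookLen Y u ^ k : ℕ) : ℤ) := by
    push_cast
    exact sum_congr rfl fun u hu => by rw [hY.hk_eq_hookLen hu]
  rw [hhook, ← hcard]
  simp only [← Int.natCast_natAbs]
  exact_mod_cast (by omega : ∑ u ∈ Y, hookLen Y u ^ k < #Y ^ k + ∑ u ∈ Y, (ct u).natAbs ^ k)
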